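/- For even $N$ the $N$-qubit three-uniform complete hypergraph state satisfies $|H^3_N\rangle = \frac{1}{2}\left(|+\rangle^{\otimes N} + |-\rangle^{\otimes N}\right) - \frac{i}{2}\left(|+_Y\rangle^{\otimes N} - |-_Y\rangle^{\otimes N}\right)$, where $|H^3_N\rangle = \frac{1}{\sqrt{2}^N}\sum_{x \in \{0,1\}^N} (-1)^{\binom{w(x)}{3}} |x\rangle$. -/
import Mathlib


open Real Finset

/-- The `N`-fold tensor power of a single-qubit vector, as a function on bit strings. -/
noncomputable def pw (N : ℕ) (v : Fin 2 → ℂ) : (Fin N → Fin 2) → ℂ :=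
  fun x => ∏ i, v (x i)

noncomputable def ketPlus : Fin 2 → ℂ := fun _ => (Real.sqrt 2 : ℂ)⁻¹
noncomputable def ketMinus : Fin 2 → ℂ :=
  fun j => if j = 0 then (Real.sqrt 2 : ℂ)⁻¹ else -(Real.sqrt 2 : ℂ)⁻¹
noncomputable def ketPlusY : Fin 2 → ℂ :=
  fun j => if j = 0 then (Real.sqrt 2 : ℂ)⁻¹ else Complex.I * (Real.sqrt 2 : ℂ)⁻¹
noncomputable def ketMinusY : Fin 2 → ℂ :=
  fun j => if j = 0 then (Real.sqrt 2 : ℂ)⁻¹ else -Complex.I * (Real.sqrt 2 : ℂ)⁻¹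

/-- The three-uniform complete hypergraph state on `N` qubits:
coefficient `(-1)^(C(w(x),3)) / √2^N` on the basis state `|x⟩`. -/
noncomputable def H3 (N : ℕ) : (Fin N → Fin 2) → ℂ :=
  fun x => (-1 : ℂ) ^ (Nat.choose (∑ i, (x i).val) 3) / (Real.sqrt 2 : ℂ) ^ N

lemma par (n : ℕ) : Nat.choose n 3 % 2 = if n % 4 = 3 then 1 else 0 := by
  induction n using Nat.strong_induction_on with
  | _ n ih =>
    match n with
    | 0 => decide
    | 1 => decide
    | 2 => decide
    | 3 => decide
    | (m+4) =>
      have h := ih m (by omega)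
      have e : Nat.choose (m+4) 3 =
          Nat.choose m 3 + 4 * Nat.choose m 2 + 6 * m + 4 := by
        simp [Nat.choose_succ_succ, Nat.choose_one_right]
        ring
      rw [e]
      have : (m + 4) % 4 = m % 4 := by omega
      rw [this]
      omega

lemma pw_eq (N : ℕ) (x : Fin N → Fin 2) (c : ℂ) (v : Fin 2 → ℂ)
    (hv : ∀ j : Fin 2, v j = c ^ j.val * (Real.sqrt 2 : ℂ)⁻¹) :
    pw N v x = c ^ (∑ i, (x i).val) * ((Real.sqrt 2 : ℂ)⁻¹) ^ N := by
  unfold pw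
  simp only [hv]
  rw [Finset.prod_mul_distrib, Finset.prod_pow_eq_pow_sum, Finset.prod_const]
  simp

theorem stmt11 (N : ℕ) (hN : Even N) :
    H3 N = fun x =>
      (1 / 2 : ℂ) * (pw N ketPlus x + pw N ketMinus x) -
        (Complex.I / 2) * (pw N ketPlusY x - pw N ketMinusY x) := by
  funext x
  set w := ∑ i, (x i).val with hwdef
  have hp : pw N ketPlus x = (1 : ℂ) ^ w * ((Real.sqrt 2 : ℂ)⁻¹) ^ N :=
    pw_eq N x 1 _ (fun j => by fin_cases j <;> simp [ketPlus])
  have hm : pw N ketMinus x = (-1 : ℂ) ^ w * ((Real.sqrt 2 : ℂ)⁻¹) ^ N :=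
    pw_eq N x (-1) _ (fun j => by fin_cases j <;> simp [ketMinus])
  have hpy : pw N ketPlusY x = (Complex.I) ^ w * ((Real.sqrt 2 : ℂ)⁻¹) ^ N :=
    pw_eq N x Complex.I _ (fun j => by fin_cases j <;> simp [ketPlusY])
  have hmy : pw N ketMinusY x = (-Complex.I) ^ w * ((Real.sqrt 2 : ℂ)⁻¹) ^ N :=
    pw_eq N x (-Complex.I) _ (fun j => by fin_cases j <;> simp [ketMinusY])
  have key : (-1 : ℂ) ^ (Nat.choose w 3) =
      (1 / 2 : ℂ) * (1 + (-1 : ℂ) ^ w) -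
        (Complex.I / 2) * (Complex.I ^ w - (-Complex.I) ^ w) := by
    obtain ⟨q, r, hr, hw⟩ : ∃ q r, r < 4 ∧ w = 4 * q + r := ⟨w / 4, w % 4, by omega, by omega⟩
    have hI4 : (Complex.I) ^ 4 = 1 := by
      norm_num [pow_succ, Complex.I_mul_I]
    have hnI4 : (-Complex.I) ^ 4 = 1 := by
      rw [neg_pow]; norm_num [hI4]
    have hI : Complex.I ^ w = Complex.I ^ r := by
      rw [hw, pow_add, pow_mul, hI4, one_pow, one_mul]
    have hnI : (-Complex.I) ^ w = (-Complex.I) ^ r := by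
      rw [hw, pow_add, pow_mul, hnI4, one_pow, one_mul]
    have hn1 : (-1 : ℂ) ^ w = (-1 : ℂ) ^ r := by
      rw [hw, pow_add, pow_mul]; norm_num
    have hpar := par w
    have hmod : w % 4 = r := by omega
    rw [hmod] at hpar
    rw [hI, hnI, hn1]
    interval_cases r <;> norm_num at hpar
    · have : Even (Nat.choose w 3) := Nat.even_iff.2 (by omega)
      rw [this.neg_one_pow]
      norm_num
    · have : Even (Nat.choose w 3) := Nat.even_iff.2 (by omega)
      rw [this.neg_one_pow]
      simp [pow_succ]
      ring_nf
      simp [Complex.I_sq]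
    · have : Even (Nat.choose w 3) := Nat.even_iff.2 (by omega)
      rw [this.neg_one_pow]
      norm_num [sq, Complex.I_mul_I]
    · have : Odd (Nat.choose w 3) := Nat.odd_iff.2 (by omega)
      rw [this.neg_one_pow]
      simp [pow_succ]
      ring_nf
      simp [Complex.I_sq]
  show (-1 : ℂ) ^ (Nat.choose w 3) / (Real.sqrt 2 : ℂ) ^ N = _
  rw [hp, hm, hpy, hmy, div_eq_mul_inv, ← inv_pow, key]
  ring
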